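/- arXiv:2504.01720 — 2 statements merged into one kernel-verified Lean document; each statement's English description precedes it below -/
import Mathlib

section
/- Let M = (Q, Σ, R, s, F) be an ε-free IETWSFA and let A ⊆ Σ* be regular. Then there is an IETWSFA M' with L(M') = {uv | usv ⇒* f in M, f ∈ F, uv ∈ A}, so this language is linear. -/
/-!
Take the product of `M` with a DFA `D` for `A`: an initial ε-move guesses the state `c` that `D`
reaches on the input left of the start position, and then `M` runs while `D` is run backwards
from `c` over the symbols erased on the left and forwards from `c` over those erased on the right;
acceptance demands that the backward run ends in `D.start` and the forward run in an accepting
state. The product still reads at most one symbol per move. Its language is linear because any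
such automaton can be read backwards as a linear grammar: a move `x q → p` or `q x → p` becomes
the rule `p → x q` or `p → q x`.
-/

namespace IETW

/-- An input-erasing two-way general finite automaton (IETWGFA). -/
structure GFA (T : Type) : Type 1 where
  Q : Type
  finQ : Finite Q
  start : Q
  accept : Set Q
  /-- Left rules: `(x, q, p)` represents `x q → p`. -/
  ruleL : Set (List T × Q × Q)
  /-- Right rules: `(q, x, p)` represents `q x → p`. -/
  ruleR : Set (Q × List T × Q)
  finL : ruleL.Finite
  finR : ruleR.Finite

variable {T : Type}

/-- One move, labelled by its direction (`true` = left) and the number of erased symbols. -/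
inductive GFA.Step (M : GFA T) :
    List T × M.Q × List T → Bool × ℕ → List T × M.Q × List T → Prop
  | left {u v x : List T} {q p : M.Q} (h : (x, q, p) ∈ M.ruleL) :
      GFA.Step M (u ++ x, q, v) (true, x.length) (u, p, v)
  | right {u v x : List T} {q p : M.Q} (h : (q, x, p) ∈ M.ruleR) :
      GFA.Step M (u, q, x ++ v) (false, x.length) (u, p, v)

/-- A computation along a list of move labels. -/
inductive GFA.Chain (M : GFA T) :
    List T × M.Q × List T → List (Bool × ℕ) → List T × M.Q × List T → Prop
  | nil (c) : GFA.Chain M c [] c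
  | cons {c c' c'' l ls} (h : GFA.Step M c l c') (h' : GFA.Chain M c' ls c'') :
      GFA.Chain M c (l :: ls) c''

/-- `L(M)`. -/
def GFA.lang (M : GFA T) : Set (List T) :=
  {w | ∃ x y ls f, w = x ++ y ∧ f ∈ M.accept ∧ M.Chain (x, M.start, y) ls ([], f, [])}

/-- The moves strictly alternate between left and right. -/
def Alternating (ls : List (Bool × ℕ)) : Prop :=
  ls.Chain' (fun a b => a.1 ≠ b.1)

/-- An even computation: alternating, of even length, and each odd-indexed move reads
the same number of symbols as the following move. -/
def EvenTrace (ls : List (Bool × ℕ)) : Prop :=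
  ls.length % 2 = 0 ∧ Alternating ls ∧
    ∀ i, 2 * i + 1 < ls.length →
      (ls.getD (2 * i) (true, 0)).2 = (ls.getD (2 * i + 1) (true, 0)).2

/-- An initialized even computation: one move followed by an even computation. -/
def InitEvenTrace (ls : List (Bool × ℕ)) : Prop :=
  ∃ l ls', ls = l :: ls' ∧ EvenTrace ls'

/-- `L(M)_alt`. -/
def GFA.langAlt (M : GFA T) : Set (List T) :=
  {w | ∃ x y ls f, w = x ++ y ∧ f ∈ M.accept ∧ Alternating ls ∧
    M.Chain (x, M.start, y) ls ([], f, [])}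

/-- `L(M)_even`. -/
def GFA.langEven (M : GFA T) : Set (List T) :=
  {w | ∃ x y ls f, w = x ++ y ∧ f ∈ M.accept ∧ EvenTrace ls ∧
    M.Chain (x, M.start, y) ls ([], f, [])}

/-- `L(M)_init-even`. -/
def GFA.langInitEven (M : GFA T) : Set (List T) :=
  {w | ∃ x y ls f, w = x ++ y ∧ f ∈ M.accept ∧ InitEvenTrace ls ∧
    M.Chain (x, M.start, y) ls ([], f, [])}

/-- All rules read at most one symbol (IETWSFA). -/
def GFA.Simple (M : GFA T) : Prop :=
  (∀ r ∈ M.ruleL, r.1.length ≤ 1) ∧ (∀ r ∈ M.ruleR, r.2.1.length ≤ 1)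

/-- No ε-rules: every rule reads at least one symbol. -/
def GFA.EpsFree (M : GFA T) : Prop :=
  (∀ r ∈ M.ruleL, r.1 ≠ ([] : List T)) ∧ (∀ r ∈ M.ruleR, r.2.1 ≠ ([] : List T))

/-- A linear grammar: rules `A → x B y` (encoded `(A, x, some (B, y))`)
or `A → x` (encoded `(A, x, none)`). -/
structure LG (T : Type) : Type 1 where
  N : Type
  finN : Finite N
  start : N
  rules : Set (N × List T × Option (N × List T))
  finR : rules.Finite

/-- One derivation step on sentential forms `u A v`. -/
inductive LG.Der (G : LG T) :
    List T × G.N × List T → List T × G.N × List T → Prop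
  | step {u v x y : List T} {A B : G.N} (h : (A, x, some (B, y)) ∈ G.rules) :
      LG.Der G (u, A, v) (u ++ x, B, y ++ v)

/-- `L(G)`. -/
def LG.lang (G : LG T) : Set (List T) :=
  {w | ∃ u A v x, Relation.ReflTransGen G.Der ([], G.start, []) (u, A, v) ∧
    (A, x, none) ∈ G.rules ∧ w = u ++ x ++ v}

/-- Even linear grammar: `|x| = |y|` in every rule `A → x B y`. -/
def LG.Even (G : LG T) : Prop :=
  ∀ r ∈ G.rules, ∀ B (y : List T), r.2.2 = some (B, y) → r.2.1.length = y.length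

/-- The language `{uv | usv ⇒* f in M, f ∈ F, uv ∈ A}`. -/
def wholeInputLang {T : Type} (M : GFA T) (A : Set (List T)) : Set (List T) :=
  {w | w ∈ A ∧ ∃ u v f ls, w = u ++ v ∧ f ∈ M.accept ∧
    M.Chain (u, M.start, v) ls ([], f, [])}

open Relation

namespace GFA

section LinearGrammar

variable (M : GFA T)

inductive ReverseRule : Option M.Q × List T × Option (Option M.Q × List T) → Prop
  | accept {f} (hf : f ∈ M.accept) : ReverseRule (none, [], some (some f, []))
  | left {x q p} (h : (x, q, p) ∈ M.ruleL) : ReverseRule (some p, x, some (some q, []))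
  | right {q x p} (h : (q, x, p) ∈ M.ruleR) : ReverseRule (some p, [], some (some q, x))
  | start : ReverseRule (some M.start, [], none)

lemma finite_setOf_reverseRule : {r | M.ReverseRule r}.Finite := by
  have := M.finQ
  refine (((M.accept.toFinite.image fun f => (none, [], some (some f, []))).union
    ((M.finL.image fun r => (some r.2.2, r.1, some (some r.2.1, []))).union
      (M.finR.image fun r => (some r.2.2, [], some (some r.1, r.2.1))))).union
    (Set.finite_singleton (some M.start, [], none))).subset ?_
  rintro _ (hf | h | h | _)
  exacts [.inl (.inl ⟨_, hf, rfl⟩), .inl (.inr (.inl ⟨_, h, rfl⟩)),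
    .inl (.inr (.inr ⟨_, h, rfl⟩)), .inr rfl]

def toLG : LG T where
  N := Option M.Q
  finN := by have := M.finQ; infer_instance
  start := none
  rules := {r | M.ReverseRule r}
  finR := M.finite_setOf_reverseRule

variable {M}

lemma toLG_der_of_step {c l c'} (h : M.Step c l c') :
    M.toLG.Der (c'.1, some c'.2.1, c'.2.2) (c.1, some c.2.1, c.2.2) := by
  cases h with
  | left h => exact LG.Der.step (G := M.toLG) (.left h)
  | @right u v x q p h => simpa using LG.Der.step (G := M.toLG) (u := u) (v := v) (.right h)

lemma toLG_derives_of_chain {c ls c'} (h : M.Chain c ls c') (hc' : c'.1 = [] ∧ c'.2.2 = []) :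
    ReflTransGen M.toLG.Der ([], some c'.2.1, []) (c.1, some c.2.1, c.2.2) := by
  induction h with
  | nil c =>
    obtain ⟨u, q, v⟩ := c
    obtain ⟨rfl, rfl⟩ := hc'
    exact .refl
  | cons h _ ih => exact (ih hc').tail (toLG_der_of_step h)

lemma exists_chain_of_toLG_derives {f : M.Q} {c}
    (h : ReflTransGen M.toLG.Der ([], some f, []) c) :
    ∃ q, c.2.1 = some q ∧ ∃ ls, M.Chain (c.1, q, c.2.2) ls ([], f, []) := by
  induction h with
  | refl => exact ⟨f, rfl, [], .nil _⟩
  | tail _ hd ih =>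
    obtain ⟨p, hp, ls, hls⟩ := ih
    obtain ⟨hr⟩ := hd
    subst hp
    rcases hr with _ | ⟨h⟩ | ⟨h⟩
    · exact ⟨_, rfl, _, .cons (.left h) hls⟩
    · exact ⟨_, rfl, _, .cons (.right h) (by simpa using hls)⟩

theorem toLG_lang : M.toLG.lang = M.lang := by
  ext w
  constructor
  · rintro ⟨u, A, v, x, hder, hx, rfl⟩
    cases hx
    rcases hder.cases_head with h | ⟨c, ⟨hf⟩, hder⟩
    · cases h
    · rcases hf with ⟨hf⟩
      obtain ⟨q, hq, ls, hls⟩ := exists_chain_of_toLG_derives hder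
      cases hq
      exact ⟨u, v, ls, _, by simp, hf, hls⟩
  · rintro ⟨u, v, ls, f, rfl, hf, hch⟩
    refine ⟨u, some M.start, v, [], .head (.step (.accept hf)) ?_, .start, by simp⟩
    exact toLG_derives_of_chain hch ⟨rfl, rfl⟩

end LinearGrammar

section ProductWithDFA

variable {σ : Type} (M : GFA T) (D : DFA T σ)

inductive ProdRuleL : List T × Option (M.Q × σ × σ) × Option (M.Q × σ × σ) → Prop
  | guess (c : σ) : ProdRuleL ([], none, some (M.start, c, c))
  | left {x q p} (h : (x, q, p) ∈ M.ruleL) (a b : σ) :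
      ProdRuleL (x, some (q, D.evalFrom a x, b), some (p, a, b))

inductive ProdRuleR : Option (M.Q × σ × σ) × List T × Option (M.Q × σ × σ) → Prop
  | right {q x p} (h : (q, x, p) ∈ M.ruleR) (a b : σ) :
      ProdRuleR (some (q, a, b), x, some (p, a, D.evalFrom b x))

variable [Finite σ]

/-- In state `some (q, a, b)`, `a` is the state `D` must reach on the remaining left input and
`b` the state reached from the guess on the right input erased so far. -/
def prodDFA : GFA T where
  Q := Option (M.Q × σ × σ)
  finQ := by have := M.finQ; infer_instance
  start := none
  accept := {r | ∃ f ∈ M.accept, ∃ b ∈ D.accept, r = some (f, D.start, b)}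
  ruleL := {r | ProdRuleL M D r}
  ruleR := {r | ProdRuleR M D r}
  finL := by
    have := M.finQ
    refine ((M.finL.image Prod.fst).insert []).prod Set.finite_univ |>.subset ?_
    rintro _ (_ | ⟨h⟩)
    exacts [⟨.inl rfl, trivial⟩, ⟨.inr ⟨_, h, rfl⟩, trivial⟩]
  finR := by
    have := M.finQ
    refine Set.finite_univ.prod ((M.finR.image fun r => r.2.1).prod Set.finite_univ) |>.subset ?_
    rintro _ ⟨h⟩
    exact ⟨trivial, ⟨_, h, rfl⟩, trivial⟩

variable {M D}

lemma prodDFA_simple (hS : M.Simple) : (M.prodDFA D).Simple := by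
  constructor
  · rintro _ (_ | ⟨h⟩)
    exacts [Nat.zero_le 1, hS.1 _ h]
  · rintro _ ⟨h⟩
    exact hS.2 _ h

lemma exists_chain_of_prodDFA_chain {c ls c'} (h : (M.prodDFA D).Chain c ls c')
    {f : M.Q} {a' b' : σ} (hc' : c' = ([], some (f, a', b'), []))
    {q : M.Q} {a b : σ} (hc : c.2.1 = some (q, a, b)) :
    (∃ ls', M.Chain (c.1, q, c.2.2) ls' ([], f, [])) ∧
      a = D.evalFrom a' c.1 ∧ b' = D.evalFrom b c.2.2 := by
  induction h generalizing q a b with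
  | nil c =>
    subst hc'
    cases hc
    exact ⟨⟨[], .nil _⟩, rfl, rfl⟩
  | cons h _ ih =>
    cases h with
    | left hr =>
      subst hc
      rcases hr with _ | ⟨hr⟩
      obtain ⟨⟨ls, hls⟩, ha, hb⟩ := ih hc' rfl
      refine ⟨⟨_, .cons (.left hr) hls⟩, ?_, hb⟩
      rw [ha, D.evalFrom_of_append]
    | right hr =>
      subst hc
      rcases hr with ⟨hr⟩
      obtain ⟨⟨ls, hls⟩, ha, rfl⟩ := ih hc' rfl
      exact ⟨⟨_, .cons (.right hr) hls⟩, ha, (D.evalFrom_of_append _ _ _).symm⟩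

lemma prodDFA_chain_of_chain {c ls c'} (h : M.Chain c ls c') (hc' : c'.1 = [] ∧ c'.2.2 = [])
    (a' b : σ) :
    ∃ ls', (M.prodDFA D).Chain (c.1, some (c.2.1, D.evalFrom a' c.1, b), c.2.2) ls'
      ([], some (c'.2.1, a', D.evalFrom b c.2.2), []) := by
  induction h generalizing b with
  | nil c =>
    obtain ⟨u, q, v⟩ := c
    obtain ⟨rfl, rfl⟩ := hc'
    exact ⟨[], .nil _⟩
  | cons h _ ih =>
    cases h with
    | @left u v x q p hr =>
      obtain ⟨ls, hls⟩ := ih hc' b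
      refine ⟨_, .cons (.left ?_) hls⟩
      rw [D.evalFrom_of_append]
      exact .left hr _ b
    | @right u v x q p hr =>
      obtain ⟨ls, hls⟩ := ih hc' (D.evalFrom b x)
      rw [← D.evalFrom_of_append] at hls
      exact ⟨_, .cons (.right (.right hr _ b)) hls⟩

theorem prodDFA_lang : (M.prodDFA D).lang = wholeInputLang M D.accepts := by
  ext w
  constructor
  · rintro ⟨u, v, ls, _, rfl, ⟨f, hf, b, hb, rfl⟩, hch⟩
    rcases hch with _ | ⟨h, hch⟩
    rcases h with ⟨⟨c⟩⟩ | ⟨⟨⟩⟩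
    obtain ⟨⟨ls', hls⟩, hc, rfl⟩ := exists_chain_of_prodDFA_chain hch rfl rfl
    refine ⟨?_, _, _, f, ls', by simp, hf, hls⟩
    dsimp only at hc hb
    change D.eval _ ∈ D.accept
    rwa [DFA.eval, List.append_nil, D.evalFrom_of_append, ← hc]
  · rintro ⟨hw, u, v, f, ls, rfl, hf, hch⟩
    obtain ⟨ls', hls'⟩ := prodDFA_chain_of_chain (D := D) hch ⟨rfl, rfl⟩ D.start (D.eval u)
    have hguess : (M.prodDFA D).Step (u ++ [], none, v) (true, 0)
        (u, some (M.start, D.eval u, D.eval u), v) := .left (ProdRuleL.guess _)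
    refine ⟨u ++ [], v, _, _, by simp, ⟨f, hf, _, ?_, rfl⟩, .cons hguess hls'⟩
    rw [DFA.eval, ← D.evalFrom_of_append]
    exact hw

end ProductWithDFA

end GFA

theorem input_whole_regular_linear_general {T : Type} (M : GFA T) (hS : M.Simple)
    (A : Set (List T)) (hA : Language.IsRegular (A : Language T)) :
    (∃ M' : GFA T, M'.Simple ∧ M'.lang = wholeInputLang M A) ∧
      (∃ G : LG T, G.lang = wholeInputLang M A) := by
  obtain ⟨σ, _, D, hD⟩ := hA
  have hlang : (M.prodDFA D).lang = wholeInputLang M A := by rw [GFA.prodDFA_lang, hD]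
  exact ⟨⟨_, GFA.prodDFA_simple hS, hlang⟩, ⟨_, GFA.toLG_lang.trans hlang⟩⟩

theorem input_whole_regular_linear {T : Type} (M : GFA T) (hS : M.Simple) (hE : M.EpsFree)
    (A : Set (List T)) (hA : Language.IsRegular (A : Language T)) :
    (∃ M' : GFA T, M'.Simple ∧ M'.lang = wholeInputLang M A) ∧
      (∃ G : LG T, G.lang = wholeInputLang M A) :=
  input_whole_regular_linear_general M hS A hA

end IETW
end

section
/- Let M = (Q, Σ, R, s, F) be an ε-free IETWSFA, A ⊆ Σ* be finite, and B ⊆ Σ* be regular. Then the language {uv | usv ⇒* f in M, f ∈ F, u ∈ A, v ∈ B} is regular (accepted by an ordinary finite automaton). -/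
namespace IETW

variable {T : Type}

/-- The language `{uv | usv ⇒* f in M, f ∈ F, u ∈ A, v ∈ B}`. -/
def leftRightLang {T : Type} (M : GFA T) (A B : Set (List T)) : Set (List T) :=
  {w | ∃ u v f ls, w = u ++ v ∧ u ∈ A ∧ v ∈ B ∧ f ∈ M.accept ∧
    M.Chain (u, M.start, v) ls ([], f, [])}

end IETW

/-!
For a fixed left part `u`, every configuration `(l, q, v)` reachable from `(u, s, ·)` has `l` a
prefix of `u`. Since each move erases at most one symbol on the right, the left quotient of
`{v | (u, s, v) ⇒* f ∈ F}` by `w` is determined by the set of pairs `(l, q)` reachable from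
`(u, s, w)` once `w` is erased, and there are finitely many such sets: by Myhill–Nerode this
language is regular. The language of the theorem is the finite union over `u ∈ A` of
`{u} · ({v | (u, s, v) ⇒* f ∈ F} ∩ B)`.
-/

namespace Language

variable {α : Type*}

theorem isRegular_zero : (0 : Language α).IsRegular :=
  .of_finite_range_leftQuotient <| (Set.finite_singleton 0).subset <| by
    rintro _ ⟨w, rfl⟩
    exact ext fun v => iff_of_false (notMem_zero _) (notMem_zero _)

theorem isRegular_biSup {ι : Type*} {s : Set ι} (hs : s.Finite) {L : ι → Language α}
    (hL : ∀ i ∈ s, (L i).IsRegular) : (⨆ i ∈ s, L i).IsRegular := by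
  induction s, hs using Set.Finite.induction_on with
  | empty => rw [iSup_emptyset]; exact isRegular_zero
  | @insert i s _ _ ih =>
    rw [iSup_insert]
    exact (hL i (s.mem_insert i)).add (ih fun j hj => hL j (s.mem_insert_of_mem i hj))

theorem mem_singleton_mul {L : Language α} {u w : List α} :
    w ∈ ({u} * L : Language α) ↔ ∃ v ∈ L, u ++ v = w :=
  ⟨fun ⟨_, hu, v, hv, h⟩ => ⟨v, hv, (show _ = u from hu) ▸ h⟩,
    fun ⟨v, hv, h⟩ => ⟨u, rfl, v, hv, h⟩⟩

theorem IsRegular.singleton_mul {L : Language α} (h : L.IsRegular) (u : List α) :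
    ({u} * L : Language α).IsRegular := by
  refine .of_finite_range_leftQuotient <| (((u.tails.finite_toSet.image fun r => {r} * L).union
    h.finite_range_leftQuotient).insert 0).subset ?_
  rintro _ ⟨w, rfl⟩
  by_cases hwu : w <+: u
  · obtain ⟨r, rfl⟩ := hwu
    refine .inr <| .inl ⟨r, (List.mem_tails _ _).2 (List.suffix_append w r), ext fun y => ?_⟩
    simp [mem_singleton_mul]
  by_cases huw : u <+: w
  · obtain ⟨r, rfl⟩ := huw
    refine .inr <| .inr ⟨r, ext fun y => ?_⟩
    simp [mem_singleton_mul]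
  refine .inl <| ext fun y => iff_of_false ?_ (notMem_zero _)
  intro hy
  obtain ⟨v, -, h⟩ := mem_singleton_mul.1 hy
  rcases List.append_eq_append_iff.1 h with ⟨r, rfl, -⟩ | ⟨r, rfl, -⟩
  exacts [huw (List.prefix_append u r), hwu (List.prefix_append w r)]

end Language

namespace IETW.GFA

variable {T : Type} {M : GFA T}

theorem Chain.append {c c' c'' : List T × M.Q × List T} {ls ls' : List (Bool × ℕ)}
    (h : M.Chain c ls c') (h' : M.Chain c' ls' c'') : M.Chain c (ls ++ ls') c'' := by
  induction h with
  | nil => exact h'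
  | cons hs _ ih => exact .cons hs (ih h')

theorem Step.append_right {c c' : List T × M.Q × List T} {lab : Bool × ℕ}
    (h : M.Step c lab c') (v : List T) :
    M.Step (c.1, c.2.1, c.2.2 ++ v) lab (c'.1, c'.2.1, c'.2.2 ++ v) := by
  cases h with
  | left hx => exact .left hx
  | right hx => rw [List.append_assoc]; exact .right hx

theorem Chain.append_right {c c' : List T × M.Q × List T} {ls : List (Bool × ℕ)}
    (h : M.Chain c ls c') (v : List T) :
    M.Chain (c.1, c.2.1, c.2.2 ++ v) ls (c'.1, c'.2.1, c'.2.2 ++ v) := by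
  induction h with
  | nil => exact .nil _
  | cons hs _ ih => exact .cons (hs.append_right v) ih

theorem Step.left_prefix {c c' : List T × M.Q × List T} {lab : Bool × ℕ} (h : M.Step c lab c') :
    c'.1 <+: c.1 := by
  cases h with
  | left => exact List.prefix_append _ _
  | right => exact List.prefix_refl _

theorem Chain.left_prefix {c c' : List T × M.Q × List T} {ls : List (Bool × ℕ)}
    (h : M.Chain c ls c') : c'.1 <+: c.1 := by
  induction h with
  | nil => exact List.prefix_refl _
  | cons hs _ ih => exact ih.trans hs.left_prefix

/-- No right move straddles the boundary between `w` and `v`, as each erases at most one symbol. -/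
theorem Chain.split_right (hS : M.Simple) {l lf w v : List T} {q f : M.Q}
    {ls : List (Bool × ℕ)} (h : M.Chain (l, q, w ++ v) ls (lf, f, [])) :
    ∃ l' q', (∃ ls₁, M.Chain (l, q, w) ls₁ (l', q', [])) ∧
      ∃ ls₂, M.Chain (l', q', v) ls₂ (lf, f, []) := by
  induction ls generalizing l q w with
  | nil =>
    generalize hz : w ++ v = z at h
    cases h
    obtain ⟨rfl, rfl⟩ := List.append_eq_nil_iff.1 hz
    exact ⟨_, _, ⟨[], .nil _⟩, [], .nil _⟩
  | cons lab ls ih =>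
    rcases w with _ | ⟨a, w⟩
    · exact ⟨l, q, ⟨[], .nil _⟩, _, h⟩
    generalize hz : a :: w ++ v = z at h
    rcases h with _ | ⟨hstep, hrest⟩
    cases hstep with
    | left hx =>
      subst hz
      obtain ⟨l', q', ⟨ls₁, h₁⟩, h₂⟩ := ih hrest
      exact ⟨l', q', ⟨_, .cons (.left hx) h₁⟩, h₂⟩
    | @right _ _ x _ _ hx =>
      rcases x with _ | ⟨b, _ | ⟨b', x⟩⟩
      · subst hz
        obtain ⟨l', q', ⟨ls₁, h₁⟩, h₂⟩ := ih (w := a :: w) hrest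
        exact ⟨l', q', ⟨_, .cons (.right hx) h₁⟩, h₂⟩
      · obtain ⟨rfl, rfl⟩ := List.cons_eq_cons.1 hz
        obtain ⟨l', q', ⟨ls₁, h₁⟩, h₂⟩ := ih hrest
        exact ⟨l', q', ⟨_, .cons (.right hx) h₁⟩, h₂⟩
      · exact absurd (hS.2 _ hx) (by simp)

variable (M) in
def acceptsFrom (l : List T) (q : M.Q) : Language T :=
  {v | ∃ f ∈ M.accept, ∃ ls, M.Chain (l, q, v) ls ([], f, [])}

variable (M) in
def reachAfter (l : List T) (q : M.Q) (w : List T) : Set (List T × M.Q) :=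
  {c | ∃ ls, M.Chain (l, q, w) ls (c.1, c.2, [])}

theorem reachAfter_subset (l : List T) (q : M.Q) (w : List T) :
    M.reachAfter l q w ⊆ {l' | l' <+: l} ×ˢ Set.univ :=
  fun _ ⟨_, h⟩ => ⟨h.left_prefix, trivial⟩

theorem leftQuotient_acceptsFrom (hS : M.Simple) (l : List T) (q : M.Q) (w : List T) :
    (M.acceptsFrom l q).leftQuotient w = ⨆ c ∈ M.reachAfter l q w, M.acceptsFrom c.1 c.2 := by
  ext v
  simp only [Language.mem_leftQuotient, Language.mem_iSup]
  constructor
  · rintro ⟨f, hf, ls, h⟩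
    obtain ⟨l', q', hreach, ls₂, h₂⟩ := h.split_right hS
    exact ⟨(l', q'), hreach, f, hf, ls₂, h₂⟩
  · rintro ⟨c, ⟨ls₁, h₁⟩, f, hf, ls₂, h₂⟩
    exact ⟨f, hf, _, (h₁.append_right v).append h₂⟩

theorem isRegular_acceptsFrom (hS : M.Simple) (l : List T) (q : M.Q) :
    (M.acceptsFrom l q).IsRegular := by
  have := M.finQ
  have hprefix : {l' | l' <+: l}.Finite :=
    l.inits.finite_toSet.subset fun l' h => (List.mem_inits l' l).2 h
  refine .of_finite_range_leftQuotient <| ((hprefix.prod Set.finite_univ).powerset.image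
    fun S => ⨆ c ∈ S, M.acceptsFrom c.1 c.2).subset ?_
  rintro _ ⟨w, rfl⟩
  exact ⟨_, reachAfter_subset l q w, (leftQuotient_acceptsFrom hS l q w).symm⟩

end IETW.GFA

namespace IETW

theorem leftRightLang_eq_iSup {T : Type} (M : GFA T) (A B : Set (List T)) :
    (leftRightLang M A B : Language T) =
      ⨆ u ∈ A, {u} * (M.acceptsFrom u M.start ⊓ (B : Language T)) := by
  ext w
  constructor
  · rintro ⟨u, v, f, ls, rfl, hu, hv, hf, h⟩
    exact Language.mem_iSup.2 ⟨u, Language.mem_iSup.2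
      ⟨hu, Language.mem_singleton_mul.2 ⟨v, ⟨⟨f, hf, ls, h⟩, hv⟩, rfl⟩⟩⟩
  · intro hw
    obtain ⟨u, hw⟩ := Language.mem_iSup.1 hw
    obtain ⟨hu, hw⟩ := Language.mem_iSup.1 hw
    obtain ⟨v, ⟨⟨f, hf, ls, h⟩, hv⟩, rfl⟩ := Language.mem_singleton_mul.1 hw
    exact ⟨u, v, f, ls, rfl, hu, hv, hf, h⟩

theorem input_Afinite_Bregular_regular_general {T : Type} (M : GFA T) (hS : M.Simple)
    (A B : Set (List T)) (hA : A.Finite)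
    (hB : Language.IsRegular (B : Language T)) :
    Language.IsRegular (leftRightLang M A B : Language T) := by
  rw [leftRightLang_eq_iSup]
  exact Language.isRegular_biSup hA fun u _ =>
    ((GFA.isRegular_acceptsFrom hS u M.start).inf hB).singleton_mul u

theorem input_Afinite_Bregular_regular {T : Type} (M : GFA T) (hS : M.Simple)
    (hE : M.EpsFree) (A B : Set (List T)) (hA : A.Finite)
    (hB : Language.IsRegular (B : Language T)) :
    Language.IsRegular (leftRightLang M A B : Language T) :=
  input_Afinite_Bregular_regular_general M hS A B hA hB

end IETW
end
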